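/- For every fixed u ∈ ℝ, F_n(u) → e^{−u²/4}/√π as n → ∞. -/

import Mathlib

open Real Filter Set

/-- For `n ≥ 1` and `u ≥ -√n`,
`F_n(u) = binom(2n + ⌊u√n⌋, n) · √n / 2^{2n + ⌊u√n⌋}`. -/
noncomputable def Fbin (n : ℕ) (u : ℝ) : ℝ :=
  (Nat.choose ((2 * (n : ℤ) + ⌊u * Real.sqrt n⌋).toNat) n : ℝ) * Real.sqrt n
    / (2 : ℝ) ^ ((2 * (n : ℤ) + ⌊u * Real.sqrt n⌋).toNat)

open Topology Asymptotics
open scoped Nat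

/-!
By Stirling's formula `m! = s m * √(2m) * (m/e)^m` with `s m → √π`. Writing `b = n + ⌊u√n⌋ = n(1 + x)`,
the quantity `binom(n + b, n) √n / 2^(n+b)` is the product of a ratio of Stirling factors, which
tends to `1/√π`, of `√((n + b)/(2b)) → 1`, and of `((n + b)/2)^(n+b) / (n^n b^b) = exp (n φ x)`
with `φ = binomialExponent`. Taylor expansion of the logarithm gives `φ x = -x²/4 + O(x³)`,
while `n x² → u²` and `x → 0`.
-/

lemma log_one_add_sub_taylor_isBigO :
    (fun y : ℝ => log (1 + y) - y + y ^ 2 / 2) =O[𝓝 0] fun y => y ^ 3 := by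
  refine IsBigO.of_bound 2 ?_
  filter_upwards [Metric.ball_mem_nhds (0 : ℝ) one_half_pos] with y hy
  rw [Metric.mem_ball, dist_zero_right, norm_eq_abs] at hy
  have h := abs_log_sub_add_sum_range_le (x := -y) (by rw [abs_neg]; linarith) 2
  norm_num [Finset.sum_range_succ] at h
  rw [norm_pow, norm_eq_abs, norm_eq_abs]
  calc |log (1 + y) - y + y ^ 2 / 2| = |-y + y ^ 2 / 2 + log (1 + y)| := by ring_nf
    _ ≤ |y| ^ 3 / (1 - |y|) := h
    _ ≤ 2 * |y| ^ 3 := by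
        rw [div_le_iff₀ (by linarith)]
        nlinarith [pow_nonneg (abs_nonneg y) 3]

noncomputable def binomialExponent (x : ℝ) : ℝ :=
  (2 + x) * log (1 + x / 2) - (1 + x) * log (1 + x)

lemma binomialExponent_add_sq_div_four_isBigO :
    (fun x => binomialExponent x + x ^ 2 / 4) =O[𝓝 0] fun x => x ^ 3 := by
  set R : ℝ → ℝ := fun y => log (1 + y) - y + y ^ 2 / 2
  have hR := log_one_add_sub_taylor_isBigO
  have hhalf : (fun x : ℝ => R (x / 2)) =O[𝓝 0] fun x => x ^ 3 := by
    refine (hR.comp_tendsto ?_).trans ?_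
    · simpa using (continuous_id.div_const (2 : ℝ)).tendsto 0
    · exact (isBigO_const_mul_self (1 / 8) (fun x : ℝ => x ^ 3) _).congr_left fun x => by
        simp only [Function.comp]; ring
  have hmul (c : ℝ) {f : ℝ → ℝ} (hf : f =O[𝓝 0] fun x => x ^ 3) :
      (fun x => (c + x) * f x) =O[𝓝 0] fun x => x ^ 3 := by
    simpa using (((continuous_const.add continuous_id).tendsto 0).isBigO_one ℝ).mul hf
  refine ((((hmul 2 hhalf).sub (hmul 1 hR)).add
    (isBigO_const_mul_self (3 / 8) _ _)).congr_left fun x => ?_)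
  simp only [binomialExponent, R]
  ring

lemma add_div_two_rpow_div_rpow_mul_rpow_eq_exp {n b : ℝ} (hn : 0 < n) (hb : 0 < b) :
    ((n + b) / 2) ^ (n + b) / (n ^ n * b ^ b) = exp (n * binomialExponent ((b - n) / n)) := by
  rw [rpow_def_of_pos (by positivity), rpow_def_of_pos hn, rpow_def_of_pos hb, ← exp_add,
    ← exp_sub]
  have h2 : 1 + (b - n) / n / 2 = (n + b) / 2 / n := by field_simp; ring
  have h1 : 1 + (b - n) / n = b / n := by field_simp; ring
  rw [binomialExponent, h1, h2, log_div (by positivity) hn.ne', log_div hb.ne' hn.ne']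
  field_simp
  congr 1
  ring

lemma factorial_eq_stirlingSeq_mul {n : ℕ} (hn : n ≠ 0) :
    (n ! : ℝ) = Stirling.stirlingSeq n * (√(2 * n) * (n / exp 1) ^ n) := by
  have : 0 < √(2 * n) * (n / exp 1) ^ n := by positivity
  rw [Stirling.stirlingSeq, div_mul_cancel₀ _ this.ne']

lemma choose_add_mul_sqrt_div_two_pow_eq {n b : ℕ} (hn : n ≠ 0) (hb : b ≠ 0) :
    ((n + b).choose n : ℝ) * √n / 2 ^ (n + b) =
      Stirling.stirlingSeq (n + b) / (Stirling.stirlingSeq n * Stirling.stirlingSeq b) *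
        √((n + b) / (2 * b)) * (((n + b) / 2) ^ (n + b) / (n ^ n * b ^ b)) := by
  have hs {m : ℕ} (hm : m ≠ 0) : Stirling.stirlingSeq m ≠ 0 :=
    (lt_of_lt_of_le (by positivity) (Stirling.sqrt_pi_le_stirlingSeq hm)).ne'
  have hsqrt : √(2 * ((n + b : ℕ) : ℝ)) * √n / (√(2 * n) * √(2 * b)) = √((n + b) / (2 * b)) := by
    rw [← sqrt_mul (by positivity), ← sqrt_mul (by positivity), ← sqrt_div (by positivity)]
    congr 1
    push_cast
    field_simp
  rw [Nat.cast_choose ℝ (Nat.le_add_right n b), add_tsub_cancel_left,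
    factorial_eq_stirlingSeq_mul hn, factorial_eq_stirlingSeq_mul hb,
    factorial_eq_stirlingSeq_mul (by omega), ← hsqrt]
  have hsn := hs hn
  have hsb := hs hb
  have hn' : (0 : ℝ) < n := by positivity
  have hb' : (0 : ℝ) < b := by positivity
  push_cast
  simp only [div_pow, pow_add]
  field_simp

lemma tendsto_div_natCast_of_tendsto_div_sqrt {f : ℕ → ℝ} {u : ℝ}
    (hf : Tendsto (fun n => f n / √n) atTop (𝓝 u)) :
    Tendsto (fun n => f n / n) atTop (𝓝 0) := by
  have h := hf.mul (tendsto_inv_atTop_zero.comp (tendsto_sqrt_atTop.comp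
    tendsto_natCast_atTop_atTop))
  rw [mul_zero] at h
  refine h.congr fun n => ?_
  simp only [Function.comp_apply, ← div_eq_mul_inv, div_div, mul_self_sqrt n.cast_nonneg]

lemma tendsto_nat_mul_binomialExponent {f : ℕ → ℝ} {u : ℝ}
    (hf : Tendsto (fun n => f n / √n) atTop (𝓝 u)) :
    Tendsto (fun n => n * binomialExponent (f n / n)) atTop (𝓝 (-u ^ 2 / 4)) := by
  have hx0 := tendsto_div_natCast_of_tendsto_div_sqrt hf
  have hsq : Tendsto (fun n => n * (f n / n) ^ 2) atTop (𝓝 (u ^ 2)) :=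
    (hf.pow 2).congr fun n => by
      rcases eq_or_ne (n : ℝ) 0 with hn | hn
      · simp [hn]
      · rw [div_pow, div_pow, sq_sqrt n.cast_nonneg]
        field_simp
  have hO : (fun n => binomialExponent (f n / n) + (f n / n) ^ 2 / 4) =O[atTop]
      fun n => (f n / n) ^ 3 :=
    binomialExponent_add_sq_div_four_isBigO.comp_tendsto hx0
  have hrem : Tendsto (fun n => n * (binomialExponent (f n / n) + (f n / n) ^ 2 / 4)) atTop
      (𝓝 0) := by
    refine ((isBigO_refl (fun n : ℕ => (n : ℝ)) atTop).mul hO).trans_tendsto ?_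
    simpa [pow_succ, mul_assoc] using hsq.mul hx0
  convert hrem.sub (hsq.div_const 4) using 2 <;> ring

lemma eventually_pos_natCast_add_of_tendsto_div_sqrt {f : ℕ → ℝ} {u : ℝ}
    (hf : Tendsto (fun n => f n / √n) atTop (𝓝 u)) :
    ∀ᶠ n : ℕ in atTop, 0 < n + f n := by
  filter_upwards [(tendsto_div_natCast_of_tendsto_div_sqrt hf).eventually_const_lt
    (neg_one_lt_zero), eventually_gt_atTop 0] with n hlt hn
  have hn' : (0 : ℝ) < n := Nat.cast_pos.2 hn
  rw [lt_div_iff₀ hn'] at hlt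
  linarith

theorem tendsto_choose_add_mul_sqrt_div_two_pow {b : ℕ → ℕ} {u : ℝ}
    (hb : Tendsto (fun n => ((b n : ℝ) - n) / √n) atTop (𝓝 u)) :
    Tendsto (fun n => ((n + b n).choose n : ℝ) * √n / 2 ^ (n + b n)) atTop
      (𝓝 (exp (-u ^ 2 / 4) / √π)) := by
  have hratio : Tendsto (fun n => (b n : ℝ) / n) atTop (𝓝 1) := by
    have h := (tendsto_div_natCast_of_tendsto_div_sqrt hb).const_add 1
    rw [add_zero] at h
    refine h.congr' ?_
    filter_upwards [eventually_gt_atTop 0] with n hn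
    field_simp
    ring
  have hbpos : ∀ᶠ n in atTop, 0 < b n := by
    filter_upwards [hratio.eventually_const_lt one_pos] with n h
    exact Nat.pos_of_ne_zero fun h0 => by simp [h0] at h
  have hbtop : Tendsto b atTop atTop := by
    rw [← tendsto_natCast_atTop_iff (R := ℝ)]
    refine (hratio.pos_mul_atTop one_pos tendsto_natCast_atTop_atTop).congr' ?_
    filter_upwards [eventually_gt_atTop 0] with n hn
    field_simp
  have hS := Stirling.tendsto_stirlingSeq_sqrt_pi
  have hstirling : Tendsto (fun n => Stirling.stirlingSeq (n + b n) /
      (Stirling.stirlingSeq n * Stirling.stirlingSeq (b n))) atTop (𝓝 (√π / (√π * √π))) :=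
    (hS.comp (tendsto_atTop_mono (fun n => le_add_self) hbtop)).div (hS.mul (hS.comp hbtop))
      (by positivity)
  have hsqrt : Tendsto (fun n => √((n + b n) / (2 * b n))) atTop (𝓝 1) := by
    have h := ((tendsto_const_nhds (x := (1 : ℝ))).add hratio).div
      ((tendsto_const_nhds (x := (2 : ℝ))).mul hratio) (by norm_num)
    rw [show ((1 : ℝ) + 1) / (2 * 1) = 1 by norm_num] at h
    rw [← Real.sqrt_one]
    refine h.sqrt.congr' ?_
    filter_upwards [eventually_gt_atTop 0, hbpos] with n hn hbn
    simp only [Pi.div_apply]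
    congr 1
    field_simp
  have hexp := (continuous_exp.tendsto _).comp (tendsto_nat_mul_binomialExponent hb)
  have hlim : √π / (√π * √π) * 1 * exp (-u ^ 2 / 4) = exp (-u ^ 2 / 4) / √π := by
    field_simp
  rw [← hlim]
  refine ((hstirling.mul hsqrt).mul hexp).congr' ?_
  filter_upwards [eventually_gt_atTop 0, hbpos] with n hn hbn
  rw [choose_add_mul_sqrt_div_two_pow_eq hn.ne' hbn.ne', Function.comp_apply,
    ← add_div_two_rpow_div_rpow_mul_rpow_eq_exp (by positivity) (by positivity)]
  norm_cast

lemma tendsto_floor_mul_div_atTop (u : ℝ) :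
    Tendsto (fun t : ℝ => (⌊u * t⌋ : ℝ) / t) atTop (𝓝 u) := by
  have hfract : Tendsto (fun t : ℝ => Int.fract (u * t) / t) atTop (𝓝 0) := by
    refine squeeze_zero' ?_ ?_ tendsto_inv_atTop_zero
    · filter_upwards [eventually_gt_atTop 0] with t ht
      exact div_nonneg (Int.fract_nonneg _) ht.le
    · filter_upwards [eventually_gt_atTop 0] with t ht
      rw [inv_eq_one_div]
      exact div_le_div_of_nonneg_right (Int.fract_lt_one _).le ht.le
  have h := (tendsto_const_nhds (x := u)).sub hfract
  rw [sub_zero] at h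
  refine h.congr' ?_
  filter_upwards [eventually_gt_atTop 0] with t ht
  rw [← Int.self_sub_floor]
  field_simp
  ring

/-- For every fixed `u ∈ ℝ`, `F_n(u) → e^{-u²/4}/√π` as `n → ∞`. -/
theorem Fbin_tendsto (u : ℝ) :
    Filter.Tendsto (fun n : ℕ => Fbin n u) atTop
      (nhds (Real.exp (-u ^ 2 / 4) / Real.sqrt π)) := by
  have hk : Tendsto (fun n : ℕ => (⌊u * √n⌋ : ℝ) / √n) atTop (𝓝 u) :=
    (tendsto_floor_mul_div_atTop u).comp (tendsto_sqrt_atTop.comp tendsto_natCast_atTop_atTop)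
  set b : ℕ → ℕ := fun n => ((n : ℤ) + ⌊u * √n⌋).toNat
  have hb : ∀ᶠ n : ℕ in atTop, (b n : ℤ) = n + ⌊u * √n⌋ := by
    filter_upwards [eventually_pos_natCast_add_of_tendsto_div_sqrt hk] with n hn
    exact Int.toNat_of_nonneg (by exact_mod_cast hn.le)
  refine (tendsto_choose_add_mul_sqrt_div_two_pow (b := b) (hk.congr' ?_)).congr' ?_
  · filter_upwards [hb] with n hn
    have h := congrArg (Int.cast : ℤ → ℝ) hn
    push_cast at h
    rw [h]
    ring
  · filter_upwards [hb] with n hn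
    rw [Fbin, show (2 * (n : ℤ) + ⌊u * √n⌋).toNat = n + b n by omega]
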